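/- arXiv:2109.04545 — 7 statements merged into one kernel-verified Lean document; each statement's English description precedes it below -/
import Mathlib

section
/- Let k_1,...,k_s be fields, and for each i ∈ {1,...,s} let f_i be a nonzero polynomial in k_i[x_1,...,x_t] such that every monomial in the support of f_i divides x_1^{n_{i1}}···x_t^{n_{it}}. For each j ∈ {1,...,t}, let C_j be a set with |C_j| > Σ_{i=1}^s n_{ij} together with injections φ_{j1},...,φ_{js} of C_j into k_1,...,k_s respectively. Then there exists (c_1,...,c_t) ∈ C_1 × ··· × C_t such that f_i(φ_{1i}(c_1),...,φ_{ti}(c_t)) ≠ 0 for every i. -/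
universe u v

theorem stmt_1_aux (s : ℕ) (k : Fin s → Type u) [∀ i, Field (k i)] :
    ∀ (t : ℕ) (f : ∀ i, MvPolynomial (Fin t) (k i)) (_ : ∀ i, f i ≠ 0)
      (n : Fin s → Fin t → ℕ)
      (_ : ∀ i, ∀ m ∈ (f i).support, ∀ j, m j ≤ n i j)
      (C : Fin t → Type v) (instC : ∀ j, Fintype (C j))
      (_ : ∀ j, ∑ i, n i j < @Fintype.card (C j) (instC j))
      (φ : ∀ j i, C j ↪ k i),
      ∃ c : ∀ j, C j, ∀ i, MvPolynomial.eval (fun j => φ j i (c j)) (f i) ≠ 0 := by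
  intro t
  induction t with
  | zero =>
    intro f hf n hdeg C instC hC φ
    refine ⟨fun j => Fin.elim0 j, fun i => ?_⟩
    obtain ⟨a, ha⟩ := MvPolynomial.C_surjective (Fin 0) (f i)
    have ha' : a ≠ 0 := by
      rintro rfl
      exact hf i (by simp [← ha])
    rw [← ha]
    simpa using ha'
  | succ t ih =>
    intro f hf n hdeg C instC hC φ
    classical
    letI := instC
    set P : ∀ i, Polynomial (MvPolynomial (Fin t) (k i)) :=
      fun i => MvPolynomial.finSuccEquiv (k i) t (f i) with hPdef
    have hP : ∀ i, P i ≠ 0 := by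
      intro i h
      apply hf i
      have h' : MvPolynomial.finSuccEquiv (k i) t (f i) = 0 := h
      exact (MvPolynomial.finSuccEquiv (k i) t).injective (by simp [h'])
    have hdegP : ∀ i, (P i).natDegree ≤ n i 0 := by
      intro i
      rw [hPdef, MvPolynomial.natDegree_finSuccEquiv]
      exact MvPolynomial.degreeOf_le_iff.2 fun m hm => hdeg i m hm 0
    -- bad sets
    set B : Fin s → Finset (C 0) := fun i =>
      Finset.univ.filter (fun c => Polynomial.eval (MvPolynomial.C (φ 0 i c)) (P i) = 0) with hBdef
    have hBcard : ∀ i, (B i).card ≤ n i 0 := by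
      intro i
      have hinj : Set.InjOn
          (fun c => (MvPolynomial.C (φ 0 i c) : MvPolynomial (Fin t) (k i))) (B i) :=
        fun a _ b _ h => (φ 0 i).injective (MvPolynomial.C_injective _ _ h)
      have hmap : ∀ c ∈ B i, MvPolynomial.C (φ 0 i c) ∈ (P i).roots.toFinset := by
        intro c hc
        rw [hBdef] at hc
        simp only [Finset.mem_filter] at hc
        rw [Multiset.mem_toFinset, Polynomial.mem_roots (hP i)]
        exact hc.2
      calc (B i).card ≤ (P i).roots.toFinset.card :=
            Finset.card_le_card_of_injOn _ hmap hinj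
        _ ≤ Multiset.card (P i).roots := Multiset.toFinset_card_le _
        _ ≤ (P i).natDegree := Polynomial.card_roots' _
        _ ≤ n i 0 := hdegP i
    obtain ⟨c0, hc0⟩ : ∃ c0, c0 ∉ Finset.univ.biUnion B := by
      by_contra h
      push_neg at h
      have hsub : (Finset.univ : Finset (C 0)) ⊆ Finset.univ.biUnion B := fun c _ => h c
      have h1 : Fintype.card (C 0) ≤ (Finset.univ.biUnion B).card := by
        simpa [Finset.card_univ] using Finset.card_le_card hsub
      have h2 : (Finset.univ.biUnion B).card ≤ ∑ i, (B i).card :=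
        Finset.card_biUnion_le
      have h3 : ∑ i, (B i).card ≤ ∑ i, n i 0 := Finset.sum_le_sum fun i _ => hBcard i
      have h4 : ∑ i, n i 0 < Fintype.card (C 0) := hC 0
      omega
    set g : ∀ i, MvPolynomial (Fin t) (k i) :=
      fun i => Polynomial.eval (MvPolynomial.C (φ 0 i c0)) (P i) with hgdef
    have hg : ∀ i, g i ≠ 0 := by
      intro i
      have : c0 ∉ B i := fun h => hc0 (Finset.mem_biUnion.2 ⟨i, Finset.mem_univ i, h⟩)
      rw [hBdef] at this
      simpa [hgdef] using this
    have hgdeg : ∀ i, ∀ m ∈ (g i).support, ∀ j, m j ≤ n i (j.succ) := by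
      intro i m hm j
      rw [MvPolynomial.mem_support_iff] at hm
      have hco : MvPolynomial.coeff m (g i) =
          ∑ d ∈ (P i).support, MvPolynomial.coeff m ((P i).coeff d) * (φ 0 i c0) ^ d := by
        show MvPolynomial.coeff m (Polynomial.eval (MvPolynomial.C (φ 0 i c0)) (P i)) = _
        rw [Polynomial.eval_eq_sum, Polynomial.sum_def, MvPolynomial.coeff_sum]
        refine Finset.sum_congr rfl fun d _ => ?_
        rw [← map_pow, mul_comm, MvPolynomial.coeff_C_mul, mul_comm]
      obtain ⟨d, _, hd⟩ : ∃ d ∈ (P i).support,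
          MvPolynomial.coeff m ((P i).coeff d) * (φ 0 i c0) ^ d ≠ 0 := by
        by_contra h
        push_neg at h
        exact hm (by rw [hco]; exact Finset.sum_eq_zero h)
      have hd' : MvPolynomial.coeff m ((P i).coeff d) ≠ 0 := fun h => hd (by simp [h])
      rw [hPdef, MvPolynomial.finSuccEquiv_coeff_coeff] at hd'
      have := hdeg i (m.cons d) (MvPolynomial.mem_support_iff.2 hd') j.succ
      simpa using this
    obtain ⟨c', hc'⟩ := ih g hg (fun i j => n i j.succ) hgdeg (fun j => C j.succ)
      (fun j => instC j.succ) (fun j => hC j.succ) (fun j i => φ j.succ i)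
    refine ⟨Fin.cons c0 c', fun i => ?_⟩
    have hfun : (fun j => φ j i (Fin.cons c0 c' j)) =
        Fin.cons (φ 0 i c0) (fun j => φ j.succ i (c' j)) := by
      ext j
      refine Fin.cases ?_ (fun j => ?_) j <;> simp
    rw [hfun, MvPolynomial.eval_eq_eval_mv_eval']
    have key : MvPolynomial.eval (fun j => φ j.succ i (c' j)) (g i) =
        Polynomial.eval (φ 0 i c0)
          (Polynomial.map (MvPolynomial.eval fun j => φ j.succ i (c' j)) (P i)) := by
      show (MvPolynomial.eval fun j => φ j.succ i (c' j))
          (Polynomial.eval₂ (RingHom.id _) (MvPolynomial.C (φ 0 i c0)) (P i)) = _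
      rw [Polynomial.hom_eval₂, RingHom.comp_id, MvPolynomial.eval_C,
        Polynomial.eval₂_eq_eval_map]
    simp only [hPdef, hgdef] at key
    rw [← key]
    exact hc' i

theorem stmt_1 {s t : ℕ} (k : Fin s → Type*) [∀ i, Field (k i)]
    (f : ∀ i, MvPolynomial (Fin t) (k i)) (hf : ∀ i, f i ≠ 0)
    (n : Fin s → Fin t → ℕ)
    (hdeg : ∀ i, ∀ m ∈ (f i).support, ∀ j, m j ≤ n i j)
    (C : Fin t → Type*) [∀ j, Fintype (C j)]
    (hC : ∀ j, ∑ i, n i j < Fintype.card (C j))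
    (φ : ∀ j i, C j ↪ k i) :
    ∃ c : ∀ j, C j, ∀ i, MvPolynomial.eval (fun j => φ j i (c j)) (f i) ≠ 0 := by
  exact stmt_1_aux s k t f hf n hdeg C (fun j => inferInstance) hC φ
end

section
/- Let A and B = (B_1 | ··· | B_t) be m × n matrices over a field k, where B_j has size m × n_j, and suppose rank(B) ≥ r. Let C_1,...,C_t be subsets of k with |C_j| > min{r, n_j} for each j. Then there exists (c_1,...,c_t) ∈ C_1 × ··· × C_t such that rank(A + (c_1 B_1 | ··· | c_t B_t)) ≥ r. -/
/-!
Choose an invertible `r × r` submatrix `B[f, g]` of `B`. The determinant of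
`A[f, g] + (x_{j(s)} B[f, g]_{i s})`, where `j(s)` is the block of the column `g s`, is a
polynomial `P` in indeterminates `x_1, …, x_t`. Setting every `x_j` to a single `X` gives
`det (X • B[f, g] + A[f, g])`, whose coefficient of `X ^ r` is `det B[f, g] ≠ 0`, so `P ≠ 0`.
Its degree in `x_j` is at most the number of chosen columns in block `j`, which is at most
`min r n_j < |C_j|`, so by the combinatorial Nullstellensatz `P` does not vanish on
`C_1 × ⋯ × C_t`.
-/

open Matrix MvPolynomial Finset

theorem exists_linearIndependent_comp_of_le_finrank_span {K V ι : Type*} [Field K]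
    [AddCommGroup V] [Module K V] [Module.Finite K V] (v : ι → V) {r : ℕ}
    (hr : r ≤ Module.finrank K (Submodule.span K (Set.range v))) :
    ∃ g : Fin r → ι, LinearIndependent K (v ∘ g) := by
  obtain ⟨κ, a, -, hspan, hli⟩ := exists_linearIndependent' K v
  have := hli.finite
  have := Fintype.ofFinite κ
  rw [← hspan, finrank_span_eq_card hli] at hr
  obtain ⟨e⟩ := Function.Embedding.nonempty_of_card_le
    (by simpa using hr : Fintype.card (Fin r) ≤ Fintype.card κ)
  exact ⟨a ∘ e, hli.comp e e.injective⟩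

theorem card_filter_fst_eq_le_of_injective {ι τ : Type*} [Fintype ι] [DecidableEq τ]
    {β : τ → Type*} [∀ j, Fintype (β j)] {g : ι → Σ j, β j} (hg : Function.Injective g)
    (j : τ) : #{s | (g s).1 = j} ≤ Fintype.card (β j) :=
  calc #{s | (g s).1 = j} ≤ #((univ : Finset (β j)).map (Function.Embedding.sigmaMk j)) := by
        refine card_le_card_of_injOn g (fun s hs => ?_) hg.injOn
        have hs : (g s).1 = j := by simpa using hs
        generalize g s = x at hs ⊢
        subst hs
        simp
    _ = Fintype.card (β j) := by simp

namespace Matrix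

variable {K : Type*} [Field K]

theorem exists_isUnit_submatrix_of_le_rank {m n : Type*} [Fintype m] [Fintype n]
    (B : Matrix m n K) {r : ℕ} (hB : r ≤ B.rank) :
    ∃ (f : Fin r → m) (g : Fin r → n), Function.Injective g ∧ IsUnit (B.submatrix f g) := by
  classical
  rw [rank_eq_finrank_span_cols] at hB
  obtain ⟨g, hg⟩ := exists_linearIndependent_comp_of_le_finrank_span B.col hB
  have hrank : r ≤ (B.submatrix id g).rank := by
    rw [← rank_transpose, LinearIndependent.rank_matrix (M := (B.submatrix id g)ᵀ) hg,
      Fintype.card_fin]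
  rw [rank_eq_finrank_span_row] at hrank
  obtain ⟨f, hf⟩ := exists_linearIndependent_comp_of_le_finrank_span _ hrank
  exact ⟨f, g, hg.injective.of_comp, linearIndependent_rows_iff_isUnit.1 hf⟩

variable {n σ : Type*} [Fintype n] [DecidableEq n]

noncomputable def columnPencilDet (a b : Matrix n n K) (v : n → σ) : MvPolynomial σ K :=
  (a.map C + of fun i s => X (v s) * C (b i s)).det

theorem eval_columnPencilDet (a b : Matrix n n K) (v : n → σ) (c : σ → K) :
    eval c (columnPencilDet a b v) = (a + of fun i s => c (v s) * b i s).det := by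
  rw [columnPencilDet, RingHom.map_det]
  congr 1
  ext i s
  simp

theorem degreeOf_columnPencilDet_le [DecidableEq σ] (a b : Matrix n n K) (v : n → σ) (j : σ) :
    (columnPencilDet a b v).degreeOf j ≤ #{s | v s = j} := by
  rw [columnPencilDet, det_apply']
  refine (degreeOf_sum_le _ _ _).trans (Finset.sup_le fun p _ => ?_)
  rw [← map_intCast (C : K →+* MvPolynomial σ K)]
  refine (degreeOf_C_mul_le _ _ _).trans ((degreeOf_prod_le _ _ _).trans ?_)
  rw [Finset.card_filter]
  refine Finset.sum_le_sum fun s _ => ?_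
  refine (degreeOf_add_le _ _ _).trans (max_le (by simp [degreeOf_C]) ?_)
  refine (degreeOf_mul_le _ _ _).trans ?_
  simp [degreeOf_C, degreeOf_X, eq_comm]

theorem columnPencilDet_ne_zero (a : Matrix n n K) {b : Matrix n n K} (hb : b.det ≠ 0)
    (v : n → σ) : columnPencilDet a b v ≠ 0 := by
  have hdiag : (aeval fun _ => Polynomial.X).mapMatrix
      (a.map C + of fun i s => X (v s) * C (b i s)) =
      (Polynomial.X : Polynomial K) • b.map Polynomial.C + a.map Polynomial.C := by
    ext i s : 1
    simp [add_comm]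
  intro h
  have := congrArg (aeval fun _ => (Polynomial.X : Polynomial K)) h
  rw [columnPencilDet, AlgHom.map_det, map_zero, hdiag] at this
  exact hb (by rw [← Polynomial.coeff_det_X_add_C_card b a, this, Polynomial.coeff_zero])

theorem exists_mem_det_add_column_scaling_ne_zero [Finite σ] [DecidableEq σ]
    (a : Matrix n n K) {b : Matrix n n K} (hb : b.det ≠ 0) (v : n → σ) (C : σ → Finset K)
    (hC : ∀ j, #{s | v s = j} < #(C j)) :
    ∃ c : σ → K, (∀ j, c j ∈ C j) ∧ (a + of fun i s => c (v s) * b i s).det ≠ 0 := by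
  by_contra! h
  refine columnPencilDet_ne_zero a hb v (eq_zero_of_eval_zero_at_prod_finset _ C
    (fun j => (degreeOf_columnPencilDet_le a b v j).trans_lt (hC j)) fun c hc => ?_)
  rw [eval_columnPencilDet]
  exact h c hc

end Matrix

theorem stmt_2 {k : Type*} [Field k] {m t : ℕ} (nn : Fin t → ℕ)
    (A B : Matrix (Fin m) (Σ j : Fin t, Fin (nn j)) k) (r : ℕ)
    (hB : r ≤ B.rank)
    (C : Fin t → Finset k) (hC : ∀ j, min r (nn j) < (C j).card) :
    ∃ c : Fin t → k, (∀ j, c j ∈ C j) ∧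
      r ≤ (A + Matrix.of fun i jl => c jl.1 * B i jl).rank := by
  obtain ⟨f, g, hg, hU⟩ := B.exists_isUnit_submatrix_of_le_rank hB
  have hcount (j : Fin t) : #{s | (g s).1 = j} < #(C j) := by
    refine lt_of_le_of_lt (le_min ?_ ?_) (hC j)
    · simpa using card_filter_le univ fun s => (g s).1 = j
    · simpa using card_filter_fst_eq_le_of_injective hg j
  obtain ⟨c, hcC, hdet⟩ := exists_mem_det_add_column_scaling_ne_zero (A.submatrix f g)
    ((isUnit_iff_isUnit_det _).1 hU).ne_zero (fun s => (g s).1) C hcount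
  refine ⟨c, hcC, ?_⟩
  calc r = Fintype.card (Fin r) := (Fintype.card_fin r).symm
    _ = ((A + of fun i jl => c jl.1 * B i jl).submatrix f g).rank :=
        (rank_of_isUnit _ ((isUnit_iff_isUnit_det _).2 hdet.isUnit)).symm
    _ ≤ _ := rank_submatrix_le _ _ _
end

section
/- Let A, B_1, ..., B_t be m × n matrices over a field k, and suppose there exists j_0 ∈ {1,...,t} with rank(B_{j_0}) ≥ r. Let C_1,...,C_t be subsets of k with |C_j| ≥ 1 + r for each j. Then there exists (c_1,...,c_t) ∈ C_1 × ··· × C_t such that rank(A + c_1 B_1 + ··· + c_t B_t) ≥ r. -/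
open Matrix Polynomial

/-- If `r ≤ rank M`, there are rectangular matrices `P`, `Q` with `P * M * Q = 1`. -/
lemma exists_factor_one {k : Type*} [Field k] {m n r : ℕ}
    (M : Matrix (Fin m) (Fin n) k) (h : r ≤ M.rank) :
    ∃ (P : Matrix (Fin r) (Fin m) k) (Q : Matrix (Fin n) (Fin r) k),
      P * M * Q = 1 := by
  obtain ⟨v, hv⟩ := exists_linearIndependent_of_le_finrank (R := k)
    (M := LinearMap.range M.mulVecLin) h
  have hw : LinearIndependent k fun i => (v i : Fin m → k) :=
    hv.map' (LinearMap.range M.mulVecLin).subtype (Submodule.ker_subtype _)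
  choose u hu using fun i => (v i).2
  set Q : Matrix (Fin n) (Fin r) k := Matrix.of fun j i => u i j with hQ
  set N : Matrix (Fin m) (Fin r) k := M * Q with hN
  have hNcol : ∀ x : Fin r → k, N.mulVec x = ∑ i, x i • (v i : Fin m → k) := by
    intro x
    funext j
    simp only [hN, Matrix.mulVec, dotProduct, Matrix.mul_apply, Finset.sum_apply,
      Pi.smul_apply, smul_eq_mul]
    refine Finset.sum_congr rfl fun i _ => ?_
    have hvij : (v i : Fin m → k) j = ∑ l, M j l * u i l := by
      rw [← hu i]; rfl
    rw [hvij, mul_comm]; rfl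
  have hker : LinearMap.ker N.mulVecLin = ⊥ := by
    rw [LinearMap.ker_eq_bot']
    intro x hx
    rw [Matrix.mulVecLin_apply, hNcol] at hx
    exact funext (Fintype.linearIndependent_iff.mp hw x hx)
  obtain ⟨g, hg⟩ := (N.mulVecLin).exists_leftInverse_of_injective hker
  refine ⟨LinearMap.toMatrix' g, Q, ?_⟩
  rw [Matrix.mul_assoc, ← hN]
  have hNmat : N = LinearMap.toMatrix' N.mulVecLin := by
    rw [← Matrix.toLin'_apply' N, LinearMap.toMatrix'_toLin']
  calc LinearMap.toMatrix' g * N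
      = LinearMap.toMatrix' (g ∘ₗ N.mulVecLin) := by
        rw [LinearMap.toMatrix'_comp, ← hNmat]
    _ = 1 := by rw [hg, LinearMap.toMatrix'_id]

/-- One-variable version. -/
lemma one_var {k : Type*} [Field k] {m n r : ℕ}
    (A B : Matrix (Fin m) (Fin n) k) (hB : r ≤ B.rank)
    (C : Finset k) (hC : r + 1 ≤ C.card) :
    ∃ c ∈ C, r ≤ (A + c • B).rank := by
  classical
  obtain ⟨P, Q, hPQ⟩ := exists_factor_one B hB
  set M₀ : Matrix (Fin r) (Fin r) k := P * A * Q with hM₀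
  set p : Polynomial k := (-M₀).charpoly with hp
  have hmon : p.Monic := Matrix.charpoly_monic _
  have hdeg : p.natDegree = r := by
    rw [hp, Matrix.charpoly_natDegree_eq_dim, Fintype.card_fin]
  have hroots : p.roots.toFinset.card ≤ r := by
    calc p.roots.toFinset.card ≤ Multiset.card p.roots := p.roots.toFinset_card_le
      _ ≤ p.natDegree := p.card_roots'
      _ = r := hdeg
  have : ∃ c ∈ C, c ∉ p.roots.toFinset := by
    by_contra hcon
    push_neg at hcon
    have := Finset.card_le_card hcon
    omega
  obtain ⟨c, hcC, hcr⟩ := this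
  have hne : p ≠ 0 := hmon.ne_zero
  have heval : p.eval c ≠ 0 := by
    intro h
    exact hcr (Multiset.mem_toFinset.mpr (Polynomial.mem_roots'.mpr ⟨hne, h⟩))
  have hevaldet : p.eval c = (c • (1 : Matrix (Fin r) (Fin r) k) + M₀).det := by
    rw [hp, Matrix.charpoly]
    show (Polynomial.evalRingHom c) _ = _
    rw [RingHom.map_det]
    congr 1
    ext i j
    rw [RingHom.mapMatrix_apply]
    by_cases hij : i = j
    · subst hij
      simp [Matrix.charmatrix_apply_eq, Matrix.one_apply, Matrix.add_apply]
    · simp [Matrix.charmatrix_apply_ne _ _ _ hij, Matrix.one_apply_ne hij,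
        Matrix.add_apply]
  have hfactor : P * (A + c • B) * Q = c • (1 : Matrix (Fin r) (Fin r) k) + M₀ := by
    rw [Matrix.mul_add, Matrix.add_mul, Matrix.mul_smul, Matrix.smul_mul, hPQ]
    abel
  have hdet : (P * (A + c • B) * Q).det ≠ 0 := by
    rw [hfactor, ← hevaldet]; exact heval
  have hunit : IsUnit (P * (A + c • B) * Q) :=
    (Matrix.isUnit_iff_isUnit_det _).mpr (isUnit_iff_ne_zero.mpr hdet)
  have hrk : (P * (A + c • B) * Q).rank = r := by
    rw [Matrix.rank_of_isUnit _ hunit, Fintype.card_fin]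
  refine ⟨c, hcC, ?_⟩
  calc r = (P * (A + c • B) * Q).rank := hrk.symm
    _ ≤ ((A + c • B) * Q).rank := by
        rw [Matrix.mul_assoc]; exact Matrix.rank_mul_le_right _ _
    _ ≤ (A + c • B).rank := Matrix.rank_mul_le_left _ _

theorem stmt_3 {k : Type*} [Field k] {m n t : ℕ}
    (A : Matrix (Fin m) (Fin n) k) (B : Fin t → Matrix (Fin m) (Fin n) k)
    (r : ℕ) (j₀ : Fin t) (hB : r ≤ (B j₀).rank)
    (C : Fin t → Finset k) (hC : ∀ j, r + 1 ≤ (C j).card) :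
    ∃ c : Fin t → k, (∀ j, c j ∈ C j) ∧
      r ≤ (A + ∑ j, c j • B j).rank := by
  have hne : ∀ j, (C j).Nonempty := fun j =>
    Finset.card_pos.mp (lt_of_lt_of_le (Nat.succ_pos r) (hC j))
  classical
  set d : Fin t → k := fun j => (hne j).choose with hd
  have hdC : ∀ j, d j ∈ C j := fun j => (hne j).choose_spec
  set S : Matrix (Fin m) (Fin n) k := ∑ j ∈ Finset.univ.erase j₀, d j • B j with hS
  obtain ⟨c₀, hc₀C, hc₀⟩ := one_var (A + S) (B j₀) hB (C j₀) (hC j₀)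
  refine ⟨Function.update d j₀ c₀, ?_, ?_⟩
  · intro j
    by_cases hj : j = j₀
    · subst hj; simpa using hc₀C
    · rw [Function.update_of_ne hj]; exact hdC j
  · have hsum : ∑ j, Function.update d j₀ c₀ j • B j = c₀ • B j₀ + S := by
      rw [← Finset.add_sum_erase _ _ (Finset.mem_univ j₀), Function.update_self]
      congr 1
      refine Finset.sum_congr rfl fun j hj => ?_
      rw [Function.update_of_ne (Finset.ne_of_mem_erase hj)]
    rw [hsum]
    have : A + (c₀ • B j₀ + S) = A + S + c₀ • B j₀ := by abel
    rw [this]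
    exact hc₀
end

section
/- Let R be a commutative ring, M and N modules over R with N Noetherian, and h ∈ Hom_R(N, M). Then h is injective if and only if for every associated prime p of N, the localization h_p restricted to the socle Soc_{R_p}(N_p) (the set of elements of N_p annihilated by p R_p) is injective. -/
/-!
Localization is exact, so injectivity of `h` gives injectivity of every `h_p`.
Conversely, if `ker h ≠ 0`, pick `y ∈ ker h` whose annihilator is maximal among
annihilators of nonzero elements of `ker h`; such a maximal annihilator `p = ann y` is prime,
hence an associated prime of `N`, and the image of `y` in `N_p` is a nonzero element of the
socle killed by `h_p`. Maximal annihilators exist because `R ⧸ ann N` embeds into some `N^n`,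
so ideals containing `ann N` satisfy the ascending chain condition.
-/

open Submodule

section

variable {R M P : Type*} [CommRing R] [AddCommGroup M] [Module R M] [AddCommGroup P] [Module R P]

theorem Submodule.exists_maximal_of_ker_le [IsNoetherian R P] (f : M →ₗ[R] P)
    (S : Set (Submodule R M)) (hS : S.Nonempty) (hker : ∀ p ∈ S, LinearMap.ker f ≤ p) :
    ∃ p ∈ S, ∀ q ∈ S, ¬p < q := by
  obtain ⟨_, ⟨p, hp, rfl⟩, hmax⟩ :=
    set_has_maximal_iff_noetherian.mpr ‹_› (map f '' S) (hS.image _)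
  refine ⟨p, hp, fun q hq hpq => hmax _ ⟨q, hq, rfl⟩ ?_⟩
  refine lt_of_le_of_ne (map_mono hpq.le) fun heq => hpq.ne ?_
  rw [← comap_map_eq_self (hker p hp), heq, comap_map_eq_self (hker q hq)]

theorem Submodule.exists_ker_le_colon_bot_singleton [Module.Finite R M] :
    ∃ (n : ℕ) (g : R →ₗ[R] Fin n → M),
      ∀ y : M, LinearMap.ker g ≤ (⊥ : Submodule R M).colon {y} := by
  obtain ⟨n, s, hs⟩ := Module.Finite.exists_fin (R := R) (M := M)
  refine ⟨n, LinearMap.pi fun i => LinearMap.toSpanSingleton R M (s i), fun y r hr => ?_⟩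
  have hann : r ∈ (span R (Set.range s)).annihilator := by
    simpa [LinearMap.ker_pi, annihilator_span, Set.forall_mem_range] using hr
  rw [hs, annihilator_top, Module.mem_annihilator] at hann
  simpa [mem_colon_singleton] using hann y

theorem Submodule.exists_isPrime_colon_bot_singleton [IsNoetherian R M] [Nontrivial M] :
    ∃ y : M, ((⊥ : Submodule R M).colon {y}).IsPrime := by
  obtain ⟨n, g, hg⟩ := exists_ker_le_colon_bot_singleton (R := R) (M := M)
  obtain ⟨x, hx⟩ := exists_ne (0 : M)
  obtain ⟨_, ⟨y, hy, rfl⟩, hmax⟩ := exists_maximal_of_ker_le g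
    ((fun y => (⊥ : Submodule R M).colon {y}) '' {y | y ≠ 0}) ⟨_, x, hx, rfl⟩
    (by rintro _ ⟨y, -, rfl⟩; exact hg y)
  refine ⟨y, Ideal.isPrime_iff.mpr
    ⟨?_, fun {a b} hab => or_iff_not_imp_left.mpr fun ha => ?_⟩⟩
  · simpa [Ideal.eq_top_iff_one, mem_colon_singleton] using hy
  · rw [mem_colon_singleton, mem_bot] at ha hab
    have hle : (⊥ : Submodule R M).colon {y} ≤ (⊥ : Submodule R M).colon {a • y} := by
      intro c hc
      rw [mem_colon_singleton, mem_bot] at hc ⊢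
      rw [smul_comm, hc, smul_zero]
    rw [hle.eq_of_not_lt (hmax _ ⟨a • y, ha, rfl⟩), mem_colon_singleton, mem_bot, smul_comm,
      smul_smul, hab]

theorem Submodule.colon_bot_singleton_map_of_injective {f : M →ₗ[R] P}
    (hf : Function.Injective f) (y : M) :
    (⊥ : Submodule R P).colon {f y} = (⊥ : Submodule R M).colon {y} := by
  ext r
  simp only [mem_colon_singleton, mem_bot, ← map_smul, map_eq_zero_iff f hf]

theorem LocalizedModule.mkLinearMap_ne_zero_of_colon_eq {p : Ideal R} [p.IsPrime] {y : M}
    (hy : (⊥ : Submodule R M).colon {y} = p) : mkLinearMap p.primeCompl M y ≠ 0 := by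
  rw [Ne, IsLocalizedModule.eq_zero_iff p.primeCompl]
  rintro ⟨⟨u, hu⟩, huy⟩
  exact hu (hy ▸ mem_colon_singleton.mpr huy)

end

theorem stmt_4 {R M N : Type*} [CommRing R]
    [AddCommGroup M] [Module R M] [AddCommGroup N] [Module R N]
    [IsNoetherian R N] (h : N →ₗ[R] M) :
    Function.Injective h ↔
      ∀ (p : Ideal R) [p.IsPrime], p ∈ associatedPrimes R N →
        ∀ x : LocalizedModule p.primeCompl N,
          (∀ a ∈ p, a • x = 0) →
          IsLocalizedModule.map p.primeCompl
            (LocalizedModule.mkLinearMap p.primeCompl N)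
            (LocalizedModule.mkLinearMap p.primeCompl M) h x = 0 →
          x = 0 := by
  refine ⟨fun hinj p _ _ x _ hx => ?_, fun H => ?_⟩
  · exact IsLocalizedModule.map_injective p.primeCompl _ _ h hinj (hx.trans (map_zero _).symm)
  rw [← LinearMap.ker_eq_bot]
  by_contra hker
  have : Nontrivial (LinearMap.ker h) := nontrivial_iff_ne_bot.mpr hker
  obtain ⟨y, hy⟩ := exists_isPrime_colon_bot_singleton (R := R) (M := LinearMap.ker h)
  rw [← colon_bot_singleton_map_of_injective (LinearMap.ker h).injective_subtype,
    subtype_apply] at hy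
  generalize hpy : (⊥ : Submodule R N).colon {(y : N)} = p at hy
  have hp : p ∈ associatedPrimes R N := ⟨hy, y, hpy ▸ hy.radical.symm⟩
  refine LocalizedModule.mkLinearMap_ne_zero_of_colon_eq hpy (H p hp _ (fun a ha => ?_) ?_)
  · rw [← map_smul, (mem_colon_singleton.mp (hpy ▸ ha) : a • (y : N) = 0), map_zero]
  · rw [IsLocalizedModule.map_apply, LinearMap.mem_ker.mp y.2, map_zero]
end

section
/- Let R be a commutative ring, N a Noetherian R-module, and K a submodule of N. If for every associated prime p of N, the intersection of K_p with the socle Soc_{R_p}(N_p) is zero, then K = 0. -/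
/-!
If `K ≠ 0`, pick `y ∈ K` whose annihilator `P` is maximal among the annihilators of nonzero
elements of `K`; such a maximum exists because `R ⧸ ann N` embeds in a finite power of `N`, so
ideals containing `ann N` satisfy the ascending chain condition. A maximal annihilator is prime,
so `P ∈ Ass N`, and `y / 1 ∈ K_P` is killed by `P R_P`. It is nonzero, since `s • y = 0` forces
`s ∈ P`, contradicting the hypothesis.
-/

namespace Module

open Submodule

variable {R M : Type*} [CommRing R] [AddCommGroup M] [Module R M]

theorem annihilator_eq_ker_pi_toSpanSingleton {n : ℕ} {s : Fin n → M}
    (hs : span R (Set.range s) = ⊤) :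
    annihilator R M = LinearMap.ker (LinearMap.pi fun i ↦ LinearMap.toSpanSingleton R M (s i)) := by
  rw [← Submodule.annihilator_top, ← hs, annihilator_span, LinearMap.ker_pi]
  exact iInf_range' (fun x ↦ LinearMap.ker (LinearMap.toSpanSingleton R M x)) s

instance isNoetherian_quotient_annihilator [IsNoetherian R M] :
    IsNoetherian R (R ⧸ annihilator R M) := by
  obtain ⟨n, s, hs⟩ := Module.Finite.exists_fin (R := R) (M := M)
  rw [annihilator_eq_ker_pi_toSpanSingleton hs]
  exact isNoetherian_of_linearEquiv (LinearMap.quotKerEquivRange _).symm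

instance wellFoundedGT_Ici_annihilator [IsNoetherian R M] :
    WellFoundedGT (Set.Ici (annihilator R M)) :=
  (comapMkQRelIso (annihilator R M)).symm.strictMono.wellFoundedGT

end Module

namespace Submodule

variable {R M : Type*} [CommRing R] [AddCommGroup M] [Module R M]

theorem annihilator_le_colon_bot (y : M) :
    Module.annihilator R M ≤ (⊥ : Submodule R M).colon {y} :=
  fun _ hr ↦ mem_colon_singleton.mpr (Module.mem_annihilator.mp hr y)

theorem isPrime_colon_bot_of_maximalFor {K : Submodule R M} {y : M}
    (hy : MaximalFor (fun z ↦ z ∈ K ∧ z ≠ 0) (fun z ↦ (⊥ : Submodule R M).colon {z}) y) :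
    ((⊥ : Submodule R M).colon {y}).IsPrime := by
  obtain ⟨⟨hyK, hy0⟩, hmax⟩ := hy
  refine ⟨fun htop ↦ hy0 ?_, fun {a b} hab ↦ or_iff_not_imp_left.mpr fun ha ↦ ?_⟩
  · rw [← mem_bot R, ← one_smul R y, ← mem_colon_singleton, htop]
    exact mem_top
  rw [mem_colon_singleton, mem_bot] at ha hab
  have hle : (⊥ : Submodule R M).colon {y} ≤ (⊥ : Submodule R M).colon {a • y} := fun c hc ↦ by
    rw [mem_colon_singleton, mem_bot] at hc ⊢
    rw [smul_comm, hc, smul_zero]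
  apply hmax ⟨K.smul_mem a hyK, ha⟩ hle
  rw [mem_colon_singleton, mem_bot, smul_smul, mul_comm, hab]

theorem exists_mem_isPrime_colon_bot [IsNoetherian R M] {K : Submodule R M} (hK : K ≠ ⊥) :
    ∃ y ∈ K, ((⊥ : Submodule R M).colon {y}).IsPrime := by
  obtain ⟨y, hy⟩ := exists_maximalFor_of_wellFoundedGT (fun z ↦ z ∈ K ∧ z ≠ 0)
    (fun z ↦ (⟨_, annihilator_le_colon_bot z⟩ : Set.Ici (Module.annihilator R M)))
    (K.ne_bot_iff.mp hK)
  exact ⟨y, hy.1.1, isPrime_colon_bot_of_maximalFor hy⟩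

end Submodule

section

variable {R M : Type*} [CommRing R] [AddCommGroup M] [Module R M]

theorem isAssociatedPrime_colon_bot_of_isPrime {y : M}
    (h : ((⊥ : Submodule R M).colon {y}).IsPrime) :
    IsAssociatedPrime ((⊥ : Submodule R M).colon {y}) M :=
  ⟨h, y, h.radical.symm⟩

theorem LocalizedModule.mkLinearMap_ne_zero_of_colon_bot_le {p : Ideal R} [p.IsPrime] {y : M}
    (h : (⊥ : Submodule R M).colon {y} ≤ p) : mkLinearMap p.primeCompl M y ≠ 0 := by
  rw [Ne, IsLocalizedModule.eq_zero_iff p.primeCompl]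
  rintro ⟨⟨s, hs⟩, hsy⟩
  exact hs (h (Submodule.mem_colon_singleton.mpr hsy))

end

theorem stmt_5 {R N : Type*} [CommRing R] [AddCommGroup N] [Module R N]
    [IsNoetherian R N] (K : Submodule R N)
    (hK : ∀ (p : Ideal R) [p.IsPrime], p ∈ associatedPrimes R N →
      ∀ x : LocalizedModule p.primeCompl N,
        x ∈ K.localized p.primeCompl → (∀ a ∈ p, a • x = 0) → x = 0) :
    K = ⊥ := by
  by_contra hK0
  obtain ⟨y, hyK, hP⟩ := Submodule.exists_mem_isPrime_colon_bot hK0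
  set P := (⊥ : Submodule R N).colon {y}
  have hy_mem : LocalizedModule.mkLinearMap P.primeCompl N y ∈ K.localized P.primeCompl :=
    ⟨y, hyK, 1, IsLocalizedModule.mk'_one _ _ y⟩
  have hy_socle : ∀ a ∈ P, a • LocalizedModule.mkLinearMap P.primeCompl N y = 0 :=
    fun a ha ↦ by rw [← map_smul, Submodule.mem_colon_singleton.mp ha, map_zero]
  exact LocalizedModule.mkLinearMap_ne_zero_of_colon_bot_le le_rfl
    (hK P (isAssociatedPrime_colon_bot_of_isPrime hP) _ hy_mem hy_socle)
end

section
/- Let R be a ℤ-graded commutative ring and M, N ℤ-graded R-modules with N Noetherian. Let h ∈ Hom_R(N, M) be homogeneous of some degree. Then h is injective if and only if for every associated prime p of N (necessarily a graded ideal), the homogeneous localization h_{(p)} restricted to Soc_{R_{(p)}}(N_{(p)}) is injective. -/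
/-!
If `h` is not injective, its kernel is a nonzero submodule of the Noetherian module `N`, so it
contains some `y ≠ 0` whose annihilator `p` is prime, i.e. an associated prime of `N`. Then `y / 1`
lies in the socle of the localization at any submonoid avoiding `p` and is killed by the localized
map, yet it is nonzero because no element outside `p` annihilates `y`. Conversely, localization
preserves injectivity.
-/

open LinearMap Submodule

section AssociatedPrimes

variable {R N : Type*} [CommRing R] [AddCommGroup N] [Module R N]

theorem isNoetherian_quotient_annihilator [IsNoetherian R N] :
    IsNoetherian R (R ⧸ Module.annihilator R N) := by
  obtain ⟨s, hs⟩ := Module.Finite.fg_top (R := R) (M := N)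
  let φ := LinearMap.pi fun g : (s : Set N) ↦ toSpanSingleton R N g
  have hker : ker φ = Module.annihilator R N := by
    rw [ker_pi, ← annihilator_span, hs, annihilator_top]
  exact hker ▸ isNoetherian_of_linearEquiv φ.quotKerEquivRange.symm

theorem wellFoundedGT_Ici_annihilator [IsNoetherian R N] :
    WellFoundedGT (Set.Ici (Module.annihilator R N)) :=
  have := isNoetherian_quotient_annihilator (R := R) (N := N)
  (comapMkQRelIso _).symm.toOrderEmbedding.wellFoundedGT

theorem annihilator_le_colon_singleton (y : N) :
    Module.annihilator R N ≤ (⊥ : Submodule R N).colon {y} := fun r hr ↦ by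
  rw [mem_colon_singleton, mem_bot]
  exact Module.mem_annihilator.mp hr y

/-- A maximal member of `{ann y | y ∈ K, y ≠ 0}` is prime; it exists because all these ideals
contain `ann N`, and `R ⧸ ann N` is a Noetherian `R`-module. -/
theorem exists_mem_ne_zero_isPrime_colon_singleton [IsNoetherian R N] {K : Submodule R N}
    (hK : K ≠ ⊥) : ∃ y ∈ K, y ≠ 0 ∧ ((⊥ : Submodule R N).colon {y}).IsPrime := by
  let f : {y // y ∈ K ∧ y ≠ 0} → Set.Ici (Module.annihilator R N) :=
    fun y ↦ ⟨_, annihilator_le_colon_singleton y.1⟩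
  obtain ⟨y₀, hy₀K, hy₀⟩ := exists_mem_ne_zero_of_ne_bot hK
  have := wellFoundedGT_Ici_annihilator (R := R) (N := N)
  obtain ⟨⟨y, hyK, hy⟩, -, hmax⟩ :=
    (InvImage.wf f wellFounded_gt).has_min Set.univ ⟨⟨y₀, hy₀K, hy₀⟩, trivial⟩
  refine ⟨y, hyK, hy, ⟨fun htop ↦ hy ?_, fun {a b} hab ↦ or_iff_not_imp_left.mpr fun ha ↦ ?_⟩⟩
  · simpa using (Ideal.eq_top_iff_one _).mp htop
  rw [mem_colon_singleton, mem_bot] at ha hab ⊢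
  have hle : (⊥ : Submodule R N).colon {y} ≤ (⊥ : Submodule R N).colon {a • y} := fun c hc ↦ by
    rw [mem_colon_singleton, mem_bot] at hc ⊢
    rw [smul_comm, hc, smul_zero]
  have heq := hle.eq_of_not_lt (hmax ⟨a • y, K.smul_mem a hyK, ha⟩ trivial)
  have hb : b ∈ (⊥ : Submodule R N).colon {a • y} := by
    rw [mem_colon_singleton, mem_bot, smul_smul, mul_comm, hab]
  simpa [← heq] using hb

theorem isAssociatedPrime_colon_singleton {y : N}
    (hy : ((⊥ : Submodule R N).colon {y}).IsPrime) :
    IsAssociatedPrime ((⊥ : Submodule R N).colon {y}) N :=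
  ⟨hy, y, hy.radical.symm⟩

theorem IsLocalizedModule.ne_zero_of_le_primeCompl_colon_singleton {N' : Type*}
    [AddCommGroup N'] [Module R N'] (S : Submonoid R) (f : N →ₗ[R] N') [IsLocalizedModule S f]
    {y : N} [((⊥ : Submodule R N).colon {y}).IsPrime]
    (hS : S ≤ ((⊥ : Submodule R N).colon {y}).primeCompl) : f y ≠ 0 := by
  rw [Ne, IsLocalizedModule.eq_zero_iff S]
  rintro ⟨s, hs⟩
  exact hS s.2 (mem_colon_singleton.mpr ((mem_bot R).mpr hs))

end AssociatedPrimes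

theorem stmt_17_general {R M N : Type*} [CommRing R]
    [AddCommGroup M] [Module R M] [AddCommGroup N] [Module R N]
    (𝒜 : ℤ → Submodule ℤ R) [GradedRing 𝒜]
    [IsNoetherian R N]
    (h : N →ₗ[R] M) :
    Function.Injective h ↔
      ∀ (p : Ideal R) [p.IsPrime], p ∈ associatedPrimes R N →
        ∀ x : LocalizedModule (SetLike.homogeneousSubmonoid 𝒜 ⊓ p.primeCompl) N,
          (∀ a ∈ p, a • x = 0) →
          IsLocalizedModule.map (SetLike.homogeneousSubmonoid 𝒜 ⊓ p.primeCompl)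
            (LocalizedModule.mkLinearMap (SetLike.homogeneousSubmonoid 𝒜 ⊓ p.primeCompl) N)
            (LocalizedModule.mkLinearMap (SetLike.homogeneousSubmonoid 𝒜 ⊓ p.primeCompl) M)
            h x = 0 →
          x = 0 := by
  refine ⟨fun hinj p _ _ x _ hx ↦ ?_, fun H ↦ ?_⟩
  · exact IsLocalizedModule.map_injective _ _ _ h hinj (hx.trans (map_zero _).symm)
  rw [← ker_eq_bot]
  by_contra hker
  obtain ⟨y, hyK, -, hp⟩ := exists_mem_ne_zero_isPrime_colon_singleton hker
  have := hp
  set p := (⊥ : Submodule R N).colon {y}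
  set S := SetLike.homogeneousSubmonoid 𝒜 ⊓ p.primeCompl
  apply IsLocalizedModule.ne_zero_of_le_primeCompl_colon_singleton S
    (LocalizedModule.mkLinearMap S N) inf_le_right
  refine H p (isAssociatedPrime_colon_singleton hp) _ (fun a ha ↦ ?_) ?_
  · rw [← map_smul, (mem_bot R).mp (mem_colon_singleton.mp ha), map_zero]
  rw [IsLocalizedModule.map_apply, mem_ker.mp hyK, map_zero]

theorem stmt_17 {R M N : Type*} [CommRing R]
    [AddCommGroup M] [Module R M] [AddCommGroup N] [Module R N]
    (𝒜 : ℤ → Submodule ℤ R) [GradedRing 𝒜]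
    (ℳ : ℤ → Submodule ℤ M) [SetLike.GradedSMul 𝒜 ℳ] [DirectSum.Decomposition ℳ]
    (𝒩 : ℤ → Submodule ℤ N) [SetLike.GradedSMul 𝒜 𝒩] [DirectSum.Decomposition 𝒩]
    [IsNoetherian R N]
    (h : N →ₗ[R] M) (i : ℤ) (hh : ∀ j : ℤ, ∀ x ∈ 𝒩 j, h x ∈ ℳ (i + j)) :
    Function.Injective h ↔
      ∀ (p : Ideal R) [p.IsPrime], p ∈ associatedPrimes R N →
        ∀ x : LocalizedModule (SetLike.homogeneousSubmonoid 𝒜 ⊓ p.primeCompl) N,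
          (∀ a ∈ p, a • x = 0) →
          IsLocalizedModule.map (SetLike.homogeneousSubmonoid 𝒜 ⊓ p.primeCompl)
            (LocalizedModule.mkLinearMap (SetLike.homogeneousSubmonoid 𝒜 ⊓ p.primeCompl) N)
            (LocalizedModule.mkLinearMap (SetLike.homogeneousSubmonoid 𝒜 ⊓ p.primeCompl) M)
            h x = 0 →
          x = 0 :=
  stmt_17_general 𝒜 h
end

section
/- Let R be a commutative ring and S a multiplicatively closed subset of R. If N is a Noetherian R-module, M an R-module, and h : N → M an injective R-linear map, then S^{-1}h : S^{-1}N → S^{-1}M is injective. Consequently, inj^F_R(M, N) ≤ inj^{F_p}_{R_p}(M_p, N_p) and cog^{F_p}_{R_p}(N_p, M_p) ≤ cog^F_R(N, M) for every prime p and every R-submodule F of Hom_R(N, M). -/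
/-!
Localization is exact, so it preserves injective maps, and it commutes with finite direct sums.
Hence localizing an injection `N^t → M` (resp. `N → M^t`) whose components lie in `F` gives an
injection whose components are the localized maps, which lie in `F_p`.
-/

/-- The injective capacity of `M` with respect to `N` over `R` restricted to `F`. -/
noncomputable def injCap {R M N : Type*} [CommRing R]
    [AddCommGroup M] [Module R M] [AddCommGroup N] [Module R N]
    (F : Submodule R (N →ₗ[R] M)) : ℕ∞ :=
  sSup {c : ℕ∞ | ∃ t : ℕ, c = t ∧ ∃ f : Fin t → (N →ₗ[R] M),
    (∀ i, f i ∈ F) ∧ Function.Injective fun n : Fin t → N => ∑ i, f i (n i)}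

/-- The number of cogenerators of `N` with respect to `M` over `R` restricted to `F`. -/
noncomputable def cogNum {R M N : Type*} [CommRing R]
    [AddCommGroup M] [Module R M] [AddCommGroup N] [Module R N]
    (F : Submodule R (N →ₗ[R] M)) : ℕ∞ :=
  sInf {c : ℕ∞ | ∃ t : ℕ, c = t ∧ ∃ f : Fin t → (N →ₗ[R] M),
    (∀ i, f i ∈ F) ∧ Function.Injective fun n : N => fun i : Fin t => f i n}

open LocalizedModule in
/-- The localization of a submodule `F ≤ Hom_R(N, M)`. -/
noncomputable def locHomSubmodule {R M N : Type*} [CommRing R]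
    [AddCommGroup M] [Module R M] [AddCommGroup N] [Module R N]
    (S : Submonoid R) (F : Submodule R (N →ₗ[R] M)) :
    Submodule (Localization S)
      (LocalizedModule S N →ₗ[Localization S] LocalizedModule S M) :=
  Submodule.span (Localization S)
    ((fun f : N →ₗ[R] M =>
        (IsLocalizedModule.map S (mkLinearMap S N) (mkLinearMap S M)
          f).extendScalarsOfIsLocalization S (Localization S)) '' F)

namespace IsLocalizedModule

variable {R : Type*} [CommRing R] (S : Submonoid R)
  {M M' N N' : Type*} [AddCommGroup M] [Module R M] [AddCommGroup M'] [Module R M']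
  [AddCommGroup N] [Module R N] [AddCommGroup N'] [Module R N']
  (g : N →ₗ[R] N') [IsLocalizedModule S g] (g' : M →ₗ[R] M') [IsLocalizedModule S g']
  {ι : Type*} [Fintype ι] (f : ι → N →ₗ[R] M)

theorem map_sum_comp_proj :
    map S (.pi fun i ↦ g ∘ₗ .proj i) g' (∑ i, f i ∘ₗ .proj i) =
      ∑ i, map S g g' (f i) ∘ₗ .proj i :=
  linearMap_ext S (.pi fun i ↦ g ∘ₗ .proj i) g' <| by
    ext
    simp

theorem map_pi :
    map S g (.pi fun i ↦ g' ∘ₗ .proj i) (.pi f) = .pi fun i ↦ map S g g' (f i) :=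
  linearMap_ext S g (.pi fun i ↦ g' ∘ₗ .proj i) <| by
    ext
    simp

theorem injective_sum_map_of_injective
    (hf : Function.Injective fun n : ι → N ↦ ∑ i, f i (n i)) :
    Function.Injective fun n : ι → N' ↦ ∑ i, map S g g' (f i) (n i) := by
  have key := map_injective S (.pi fun i ↦ g ∘ₗ .proj i) g' (∑ i, f i ∘ₗ .proj i)
    (by convert hf; simp [LinearMap.sum_apply])
  rw [map_sum_comp_proj] at key
  convert key
  simp [LinearMap.sum_apply]

theorem injective_pi_map_of_injective
    (hf : Function.Injective fun n : N ↦ fun i ↦ f i n) :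
    Function.Injective fun n : N' ↦ fun i ↦ map S g g' (f i) n := by
  have key := map_injective S g (.pi fun i ↦ g' ∘ₗ .proj i) (.pi f) hf
  rwa [map_pi] at key

end IsLocalizedModule

open IsLocalizedModule

section Capacities

variable {R M N : Type*} [CommRing R] [AddCommGroup M] [Module R M]
  [AddCommGroup N] [Module R N] (S : Submonoid R) (F : Submodule R (N →ₗ[R] M))

theorem extendScalars_map_mem_locHomSubmodule {f : N →ₗ[R] M} (hf : f ∈ F) :
    (map S (LocalizedModule.mkLinearMap S N) (LocalizedModule.mkLinearMap S M)
      f).extendScalarsOfIsLocalization S (Localization S) ∈ locHomSubmodule S F :=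
  Submodule.subset_span ⟨f, hf, rfl⟩

theorem injCap_le_injCap_locHomSubmodule : injCap F ≤ injCap (locHomSubmodule S F) := by
  refine sSup_le_sSup ?_
  rintro _ ⟨t, rfl, f, hfF, hf⟩
  exact ⟨t, rfl, _, fun i ↦ extendScalars_map_mem_locHomSubmodule S F (hfF i),
    injective_sum_map_of_injective S _ _ f hf⟩

theorem cogNum_locHomSubmodule_le_cogNum : cogNum (locHomSubmodule S F) ≤ cogNum F := by
  refine sInf_le_sInf ?_
  rintro _ ⟨t, rfl, f, hfF, hf⟩
  exact ⟨t, rfl, _, fun i ↦ extendScalars_map_mem_locHomSubmodule S F (hfF i),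
    injective_pi_map_of_injective S _ _ f hf⟩

end Capacities

theorem stmt_19_general {R M N : Type*} [CommRing R]
    [AddCommGroup M] [Module R M] [AddCommGroup N] [Module R N] :
    (∀ (S : Submonoid R) (h : N →ₗ[R] M), Function.Injective h →
      Function.Injective
        (IsLocalizedModule.map S (LocalizedModule.mkLinearMap S N)
          (LocalizedModule.mkLinearMap S M) h)) ∧
    (∀ (F : Submodule R (N →ₗ[R] M)) (p : Ideal R) [p.IsPrime],
      injCap F ≤ injCap (locHomSubmodule p.primeCompl F) ∧
      cogNum (locHomSubmodule p.primeCompl F) ≤ cogNum F) :=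
  ⟨fun S h hh ↦ map_injective S _ _ h hh, fun F _ _ ↦
    ⟨injCap_le_injCap_locHomSubmodule _ F, cogNum_locHomSubmodule_le_cogNum _ F⟩⟩

theorem stmt_19 {R M N : Type*} [CommRing R]
    [AddCommGroup M] [Module R M] [AddCommGroup N] [Module R N]
    [IsNoetherian R N] :
    (∀ (S : Submonoid R) (h : N →ₗ[R] M), Function.Injective h →
      Function.Injective
        (IsLocalizedModule.map S (LocalizedModule.mkLinearMap S N)
          (LocalizedModule.mkLinearMap S M) h)) ∧
    (∀ (F : Submodule R (N →ₗ[R] M)) (p : Ideal R) [p.IsPrime],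
      injCap F ≤ injCap (locHomSubmodule p.primeCompl F) ∧
      cogNum (locHomSubmodule p.primeCompl F) ≤ cogNum F) :=
  stmt_19_general
end
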